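/- arXiv:1507.00552 — 2 statements merged into one kernel-verified Lean document; each statement's English description precedes it below -/
import Mathlib

section
/- Let X be a random variable taking values in the nonnegative integers with E[X] = 1 and Var[X] ≤ v for some real number v > 0. Then P(X ≥ 1) ≥ 1/(8v + 4). -/
open MeasureTheory ProbabilityTheory

/-!
By Cauchy–Schwarz applied to `X = X · 𝟙{X ≥ 1}`, `E[X]² ≤ E[X²] · P(X ≥ 1)`, and
`E[X²] = Var[X] + E[X]² ≤ v + 1`, so `P(X ≥ 1) ≥ 1 / (v + 1) ≥ 1 / (8v + 4)`.
-/

section SecondMoment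

variable {α : Type*} {mα : MeasurableSpace α} {μ : Measure α}

theorem sq_integral_mul_le_of_nonneg {f g : α → ℝ} (hf_nonneg : 0 ≤ᵐ[μ] f)
    (hg_nonneg : 0 ≤ᵐ[μ] g) (hf : MemLp f 2 μ) (hg : MemLp g 2 μ) :
    (∫ a, f a * g a ∂μ) ^ 2 ≤ (∫ a, f a ^ 2 ∂μ) * ∫ a, g a ^ 2 ∂μ := by
  have two : ENNReal.ofReal 2 = 2 := by norm_num
  have holder := integral_mul_le_Lp_mul_Lq_of_nonneg Real.HolderConjugate.two_two
    hf_nonneg hg_nonneg (two ▸ hf) (two ▸ hg)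
  simp only [Real.rpow_two, ← Real.sqrt_eq_rpow] at holder
  rw [← Real.sqrt_mul (integral_nonneg_of_ae (by filter_upwards [] with a; positivity))] at holder
  have hfg_nonneg : 0 ≤ ∫ a, f a * g a ∂μ := integral_nonneg_of_ae <| by
    filter_upwards [hf_nonneg, hg_nonneg] with a hfa hga using mul_nonneg hfa hga
  have hsq_nonneg : 0 ≤ (∫ a, f a ^ 2 ∂μ) * ∫ a, g a ^ 2 ∂μ :=
    mul_nonneg (integral_nonneg fun a => sq_nonneg _) (integral_nonneg fun a => sq_nonneg _)
  exact (Real.le_sqrt hfg_nonneg hsq_nonneg).mp holder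

theorem sq_integral_le_integral_sq_mul_measureReal [IsFiniteMeasure μ] {f : α → ℝ} {s : Set α}
    (hs : MeasurableSet s) (hf_nonneg : 0 ≤ f) (hf : MemLp f 2 μ) (hfs : ∀ a ∉ s, f a = 0) :
    (∫ a, f a ∂μ) ^ 2 ≤ (∫ a, f a ^ 2 ∂μ) * μ.real s := by
  set g : α → ℝ := s.indicator fun _ => 1
  have hf_ind : ∀ a, f a * g a = f a := by
    intro a
    by_cases ha : a ∈ s <;> simp [g, ha, hfs]
  have hg_sq : ∫ a, g a ^ 2 ∂μ = μ.real s := by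
    have : ∀ a, g a ^ 2 = g a := by
      intro a
      by_cases ha : a ∈ s <;> simp [g, ha]
    simp only [this]
    simp [g, integral_indicator_const _ hs]
  have cs := sq_integral_mul_le_of_nonneg (g := g) (Filter.Eventually.of_forall hf_nonneg)
    (Filter.Eventually.of_forall (Set.indicator_nonneg fun _ _ => zero_le_one))
    hf (memLp_indicator_const 2 hs 1 (Or.inr (measure_ne_top μ s)))
  simpa only [hf_ind, hg_sq] using cs

end SecondMoment

theorem stmt_3_general {Ω : Type*} {m0 : MeasurableSpace Ω} (μ : Measure Ω) [IsProbabilityMeasure μ]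
    (X : Ω → ℕ) (hX : Measurable X)
    (hXsq : MemLp (fun ω => (X ω : ℝ)) 2 μ)
    (hmean : ∫ ω, (X ω : ℝ) ∂μ = 1)
    (v : ℝ)
    (hvar : variance (fun ω => (X ω : ℝ)) μ ≤ v) :
    ENNReal.ofReal (1 / (8 * v + 4)) ≤ μ {ω | 1 ≤ X ω} := by
  set S : Set Ω := {ω | 1 ≤ X ω}
  have hsecond := sq_integral_le_integral_sq_mul_measureReal (μ := μ) (s := S)
    (hX measurableSet_Ici) (fun ω => Nat.cast_nonneg (X ω)) hXsq fun ω hω => by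
      have : X ω = 0 := by
        by_contra h
        exact hω (Nat.one_le_iff_ne_zero.mpr h)
      simp [this]
  have hmoment : ∫ ω, (X ω : ℝ) ^ 2 ∂μ = variance (fun ω => (X ω : ℝ)) μ + 1 := by
    simpa [hmean] using (eq_add_of_sub_eq' (variance_eq_sub hXsq).symm).trans (add_comm _ _)
  rw [hmean, hmoment, one_pow] at hsecond
  have hvar_nonneg := variance_nonneg (fun ω => (X ω : ℝ)) μ
  have hP : 1 ≤ (v + 1) * μ.real S :=
    hsecond.trans (mul_le_mul_of_nonneg_right (by linarith) measureReal_nonneg)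
  refine ENNReal.ofReal_le_of_le_toReal ?_
  rw [div_le_iff₀ (by linarith), ← measureReal_def]
  nlinarith [measureReal_nonneg (μ := μ) (s := S)]

/-- Chebyshev-based anti-concentration: a nonnegative-integer-valued random variable with mean 1
and variance at most `v > 0` is at least 1 with probability at least `1 / (8 * v + 4)`. -/
theorem stmt_3 {Ω : Type*} {m0 : MeasurableSpace Ω} (μ : Measure Ω) [IsProbabilityMeasure μ]
    (X : Ω → ℕ) (hX : Measurable X)
    (hXsq : MemLp (fun ω => (X ω : ℝ)) 2 μ)
    (hmean : ∫ ω, (X ω : ℝ) ∂μ = 1)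
    (v : ℝ) (hv : 0 < v)
    (hvar : variance (fun ω => (X ω : ℝ)) μ ≤ v) :
    ENNReal.ofReal (1 / (8 * v + 4)) ≤ μ {ω | 1 ≤ X ω} :=
  stmt_3_general (m0 := m0) μ X hX hXsq hmean v hvar
end

section
/- Let (Ω, ℱ, P) be a probability space with a filtration (ℱ_i)_{i∈ℕ}, and let (Z_i)_{i∈ℕ} be a sequence of square-integrable random variables taking values in the nonnegative integers, adapted to (ℱ_i), such that Z_0 = 1 almost surely, E[Z_{i+1} | ℱ_i] = Z_i almost surely, and E[(Z_{i+1} − Z_i)² | ℱ_i] ≤ 2·Z_i almost surely for every i. Then for every integer i ≥ 1, P(Z_i ≥ 1) ≥ 1/(16i + 4). -/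
/-!
The process is a martingale, so `𝔼[Z i] = 𝔼[Z 0] = 1`, and martingale increments are
orthogonal in `L²`, so
`𝔼[Z i ^ 2] = 𝔼[Z 0 ^ 2] + ∑_{k < i} 𝔼[(Z (k + 1) - Z k) ^ 2] ≤ 1 + 2 i`,
each increment contributing at most `2 𝔼[Z k] = 2`. The second moment method
`𝔼[Z]² ≤ 𝔼[Z²] · P(Z ≠ 0)` then gives `P(Z i ≥ 1) ≥ 1 / (2 i + 1)`.
-/

open MeasureTheory ProbabilityTheory

section SecondMoment

variable {Ω : Type*} {m0 : MeasurableSpace Ω} {μ : Measure Ω}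

theorem sq_integral_le_integral_sq_mul_measureReal_s4 [IsFiniteMeasure μ] {X : Ω → ℝ}
    (hX : MemLp X 2 μ) {A : Set Ω} (hA : MeasurableSet A) (hXA : ∀ ω ∉ A, X ω = 0) :
    (∫ ω, X ω ∂μ) ^ 2 ≤ (∫ ω, X ω ^ 2 ∂μ) * μ.real A := by
  -- `c ↦ 𝔼[(X - c 𝟙_A)²]` is a nonnegative quadratic, so its discriminant is nonpositive.
  have hquad : ∀ c : ℝ,
      0 ≤ μ.real A * (c * c) + (-2 * ∫ ω, X ω ∂μ) * c + ∫ ω, X ω ^ 2 ∂μ := by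
    intro c
    have hexpand : (fun ω => (X ω - A.indicator (fun _ => c) ω) ^ 2) =
        fun ω => (X ω ^ 2 - 2 * c * X ω) + A.indicator (fun _ => c ^ 2) ω := by
      ext ω
      by_cases hω : ω ∈ A
      · simp only [Set.indicator_of_mem hω]; ring
      · simp [Set.indicator_of_notMem hω, hXA ω hω]
    have hXint : Integrable (fun ω => 2 * c * X ω) μ := (hX.integrable one_le_two).const_mul _
    have hpoly : Integrable (fun ω => X ω ^ 2 - 2 * c * X ω) μ := hX.integrable_sq.sub hXint
    calc 0 ≤ ∫ ω, (X ω - A.indicator (fun _ => c) ω) ^ 2 ∂μ :=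
          integral_nonneg fun ω => sq_nonneg _
      _ = _ := by
        rw [hexpand, integral_add hpoly ((integrable_const _).indicator hA),
          integral_sub hX.integrable_sq hXint, integral_const_mul,
          integral_indicator_const _ hA, smul_eq_mul]
        ring
  have hdiscrim := discrim_le_zero hquad
  rw [discrim] at hdiscrim
  nlinarith

theorem integral_mul_eq_zero_of_condExp_ae_eq_zero {m : MeasurableSpace Ω} (hm : m ≤ m0)
    [SigmaFinite (μ.trim hm)] {g h : Ω → ℝ} (hg : StronglyMeasurable[m] g)
    (hgh : Integrable (g * h) μ) (hh : Integrable h μ) (hcond : μ[h | m] =ᵐ[μ] 0) :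
    ∫ ω, g ω * h ω ∂μ = 0 := by
  rw [← integral_condExp hm]
  calc ∫ ω, μ[g * h | m] ω ∂μ = ∫ ω, (g * μ[h | m]) ω ∂μ :=
        integral_congr_ae (condExp_mul_of_stronglyMeasurable_left hg hgh hh)
    _ = 0 := integral_eq_zero_of_ae (hcond.mono fun ω hω => by simp [hω])

namespace MeasureTheory.Martingale

variable [IsFiniteMeasure μ] {ℱ : Filtration ℕ m0} {f : ℕ → Ω → ℝ}

theorem integral_eq_integral_zero (hf : Martingale f ℱ μ) (n : ℕ) :
    ∫ ω, f n ω ∂μ = ∫ ω, f 0 ω ∂μ := by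
  simpa using (hf.setIntegral_eq n.zero_le MeasurableSet.univ).symm

theorem condExp_sub_ae_eq_zero (hf : Martingale f ℱ μ) (n : ℕ) :
    μ[f (n + 1) - f n | ℱ n] =ᵐ[μ] 0 := by
  filter_upwards [condExp_sub (hf.integrable (n + 1)) (hf.integrable n) (ℱ n),
    hf.condExp_ae_eq n.le_succ] with ω hsub hsucc
  rw [hsub, Pi.sub_apply, hsucc,
    condExp_of_stronglyMeasurable (ℱ.le n) (hf.stronglyMeasurable n) (hf.integrable n)]
  simp

theorem integral_sq_succ (hf : Martingale f ℱ μ) (hL2 : ∀ n, MemLp (f n) 2 μ) (n : ℕ) :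
    ∫ ω, f (n + 1) ω ^ 2 ∂μ = ∫ ω, f n ω ^ 2 ∂μ + ∫ ω, (f (n + 1) ω - f n ω) ^ 2 ∂μ := by
  have hΔ : MemLp (f (n + 1) - f n) 2 μ := (hL2 (n + 1)).sub (hL2 n)
  have hcross_int : Integrable (fun ω => f n ω * (f (n + 1) ω - f n ω)) μ :=
    (hL2 n).integrable_mul hΔ
  have hcross : ∫ ω, f n ω * (f (n + 1) ω - f n ω) ∂μ = 0 :=
    integral_mul_eq_zero_of_condExp_ae_eq_zero (ℱ.le n) (hf.stronglyMeasurable n) hcross_int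
      ((hf.integrable _).sub (hf.integrable n)) (hf.condExp_sub_ae_eq_zero n)
  calc ∫ ω, f (n + 1) ω ^ 2 ∂μ
      = ∫ ω, (f n ω ^ 2 + 2 * (f n ω * (f (n + 1) ω - f n ω)))
          + (f (n + 1) ω - f n ω) ^ 2 ∂μ := by
        congr 1; ext ω; ring
    _ = _ := by
      rw [integral_add (f := fun ω => f n ω ^ 2 + 2 * (f n ω * (f (n + 1) ω - f n ω)))
          (g := fun ω => (f (n + 1) ω - f n ω) ^ 2)
          ((hL2 n).integrable_sq.add (hcross_int.const_mul 2)) hΔ.integrable_sq,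
        integral_add (hL2 n).integrable_sq (hcross_int.const_mul 2), integral_const_mul, hcross]
      simp

theorem integral_sq_le (hf : Martingale f ℱ μ) (hL2 : ∀ n, MemLp (f n) 2 μ) {c : ℝ}
    (hc : ∀ n, ∫ ω, (f (n + 1) ω - f n ω) ^ 2 ∂μ ≤ c) (n : ℕ) :
    ∫ ω, f n ω ^ 2 ∂μ ≤ ∫ ω, f 0 ω ^ 2 ∂μ + n * c := by
  induction n with
  | zero => simp
  | succ n ih =>
    rw [hf.integral_sq_succ hL2]
    push_cast
    linarith [hc n]

theorem integral_sq_le_of_condExp_sq_sub_le (hf : Martingale f ℱ μ)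
    (hL2 : ∀ n, MemLp (f n) 2 μ) {c : ℝ}
    (hc : ∀ n, μ[(fun ω => (f (n + 1) ω - f n ω) ^ 2) | ℱ n] ≤ᵐ[μ] fun ω => c * f n ω)
    (n : ℕ) :
    ∫ ω, f n ω ^ 2 ∂μ ≤ ∫ ω, f 0 ω ^ 2 ∂μ + n * (c * ∫ ω, f 0 ω ∂μ) := by
  refine hf.integral_sq_le hL2 (fun k => ?_) n
  calc ∫ ω, (f (k + 1) ω - f k ω) ^ 2 ∂μ
      = ∫ ω, μ[(fun ω => (f (k + 1) ω - f k ω) ^ 2) | ℱ k] ω ∂μ :=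
        (integral_condExp (ℱ.le k)).symm
    _ ≤ ∫ ω, c * f k ω ∂μ :=
        integral_mono_ae integrable_condExp ((hf.integrable k).const_mul c) (hc k)
    _ = c * ∫ ω, f 0 ω ∂μ := by rw [integral_const_mul, hf.integral_eq_integral_zero]

end MeasureTheory.Martingale

end SecondMoment

/-- Survival probability of a critical integer-valued martingale branching process with
per-step conditional variance at most `2 * Z i`: `P(Z i ≥ 1) ≥ 1 / (16 * i + 4)` for `i ≥ 1`. -/
theorem stmt_4 {Ω : Type*} {m0 : MeasurableSpace Ω} (μ : Measure Ω) [IsProbabilityMeasure μ]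
    (ℱ : Filtration ℕ m0) (Z : ℕ → Ω → ℕ)
    (hZsq : ∀ i, MemLp (fun ω => (Z i ω : ℝ)) 2 μ)
    (hZadapted : Adapted ℱ (fun i ω => (Z i ω : ℝ)))
    (hZ0 : Z 0 =ᵐ[μ] fun _ => (1 : ℕ))
    (hmean : ∀ i, μ[(fun ω => (Z (i + 1) ω : ℝ)) | ℱ i] =ᵐ[μ] fun ω => (Z i ω : ℝ))
    (hvar : ∀ i, μ[(fun ω => ((Z (i + 1) ω : ℝ) - (Z i ω : ℝ)) ^ 2) | ℱ i] ≤ᵐ[μ]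
      fun ω => 2 * (Z i ω : ℝ)) :
    ∀ i : ℕ, 1 ≤ i →
      ENNReal.ofReal (1 / (16 * (i : ℝ) + 4)) ≤ μ {ω | 1 ≤ Z i ω} := by
  intro i _
  have hZ : Martingale (fun i ω => (Z i ω : ℝ)) ℱ μ :=
    martingale_nat hZadapted.stronglyAdapted (fun i => (hZsq i).integrable one_le_two)
      fun i => (hmean i).symm
  have hZ0_real : (fun ω => (Z 0 ω : ℝ)) =ᵐ[μ] fun _ => 1 := hZ0.mono fun ω h => by simp [h]
  have hZ0_sq : (fun ω => (Z 0 ω : ℝ) ^ 2) =ᵐ[μ] fun _ => 1 := hZ0.mono fun ω h => by simp [h]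
  have hmean_one : ∫ ω, (Z i ω : ℝ) ∂μ = 1 := by
    rw [hZ.integral_eq_integral_zero i, integral_congr_ae hZ0_real]
    simp
  have hsq : ∫ ω, (Z i ω : ℝ) ^ 2 ∂μ ≤ 2 * i + 1 := by
    have := hZ.integral_sq_le_of_condExp_sq_sub_le hZsq hvar i
    rw [integral_congr_ae hZ0_real, integral_congr_ae hZ0_sq] at this
    simpa [add_comm, mul_comm] using this
  have hA : MeasurableSet {ω | 1 ≤ Z i ω} := by
    simpa using measurableSet_le (measurable_const (a := (1 : ℝ)))
      ((hZadapted i).mono (ℱ.le i) le_rfl)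
  have hsecond := sq_integral_le_integral_sq_mul_measureReal_s4 (hZsq i) hA
    fun ω hω => by simpa using hω
  rw [hmean_one] at hsecond
  rw [← ofReal_measureReal]
  refine ENNReal.ofReal_le_ofReal ((div_le_iff₀ (by positivity)).2 ?_)
  nlinarith [measureReal_nonneg (μ := μ) (s := {ω | 1 ≤ Z i ω})]
end
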